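/- Reduction to Boolean form: for every DL-PA∥ formula φ there exists a formula ψ that is a Boolean combination (built with ¬, ∨, ⊤) of formulas of the three forms p, ⟨+p⟩⊤, and ⟨p?ⁿ⟩⊤ ∨ ⟨¬p?ⁿ⟩⊤ (for p ∈ ℙ), such that the formula φ ↔ ψ is valid, i.e. φ and ψ are true in exactly the same models. -/

import Mathlib

set_option maxHeartbeats 1000000

/-- Propositional variables. -/
abbrev PVar := ℕ

/-- A DL-PA∥ model: readable variables `R`, writable variables `W`,
valuation `V`, with writability implying readability. -/
@[ext]
structure Model where
  R : Set PVar
  W : Set PVar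
  V : Set PVar
  sub : W ⊆ R

mutual
/-- Formulas of DL-PA∥. -/
inductive Formula : Type where
  | atom : PVar → Formula
  | top  : Formula
  | neg  : Formula → Formula
  | or   : Formula → Formula → Formula
  | dia  : Program → Formula → Formula
/-- Programs of DL-PA∥. -/
inductive Program : Type where
  | assignT : PVar → Program   -- +p
  | assignF : PVar → Program   -- −p
  | addR : PVar → Program      -- +r p
  | remR : PVar → Program      -- −r p
  | addW : PVar → Program      -- +w p
  | remW : PVar → Program      -- −w p
  | testEx : Formula → Program -- exogenous test φ?
  | testEn : Formula → Program -- endogenous test φ?ⁿ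
  | seq : Program → Program → Program
  | choice : Program → Program → Program
  | star : Program → Program
  | par : Program → Program → Program
end

/-- RW-disjointness. -/
def RWdisjoint (M1 M2 : Model) : Prop :=
  M1.W ∩ M2.R = ∅ ∧ M2.W ∩ M1.R = ∅

/-- Split relation `M ◁ (M₁,M₂)`. -/
def SplitRel (M M1 M2 : Model) : Prop :=
  RWdisjoint M1 M2 ∧ M.R = M1.R ∪ M2.R ∧ M.W = M1.W ∪ M2.W ∧ M.V = M1.V ∧ M.V = M2.V

/-- Merge relation `M ▷ (M₁,M₂)`. -/
def MergeRel (M M1 M2 : Model) : Prop :=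
  RWdisjoint M1 M2 ∧ M.R = M1.R ∪ M2.R ∧ M.W = M1.W ∪ M2.W ∧
  M1.V \ M.W = M2.V \ M.W ∧ M.V = (M1.V ∩ M1.W) ∪ (M2.V ∩ M2.W) ∪ (M1.V ∩ M2.V)

/-- Indistinguishability `M ∼ M'`. -/
def Indist (M M' : Model) : Prop :=
  M.R = M'.R ∧ M.W = M'.W ∧ M.V ∩ M.R = M'.V ∩ M'.R

mutual
/-- Truth of a formula in a model. -/
def Sat : Model → Formula → Prop
  | M, .atom p => p ∈ M.V
  | _, .top => True
  | M, .neg φ => ¬ Sat M φ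
  | M, .or φ ψ => Sat M φ ∨ Sat M ψ
  | M, .dia π φ => ∃ M', Interp π M M' ∧ Sat M' φ
/-- Interpretation of programs as relations between models. -/
def Interp : Program → Model → Model → Prop
  | .assignT p, M, M' => M'.R = M.R ∧ M'.W = M.W ∧ M'.V = M.V ∪ {p} ∧ p ∈ M.W
  | .assignF p, M, M' => M'.R = M.R ∧ M'.W = M.W ∧ M'.V = M.V \ {p} ∧ p ∈ M.W
  | .addR p, M, M' => M'.R = M.R ∪ {p} ∧ M'.W = M.W ∧ M'.V = M.V
  | .remR p, M, M' => M'.R = M.R \ {p} ∧ M'.W = M.W \ {p} ∧ M'.V = M.V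
  | .addW p, M, M' => M'.R = M.R ∪ {p} ∧ M'.W = M.W ∪ {p} ∧ M'.V = M.V
  | .remW p, M, M' => M'.R = M.R ∧ M'.W = M.W \ {p} ∧ M'.V = M.V
  | .testEx φ, M, M' => M = M' ∧ Sat M φ
  | .testEn φ, M, M' => M = M' ∧ ∀ M'', Indist M'' M → Sat M'' φ
  | .seq π1 π2, M, M' => ∃ M'', Interp π1 M M'' ∧ Interp π2 M'' M'
  | .choice π1 π2, M, M' => Interp π1 M M' ∨ Interp π2 M M'
  | .star π, M, M' => Relation.ReflTransGen (fun A B => Interp π A B) M M'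
  | .par π1 π2, M, M' => ∃ M1 M2 M1' M2',
      SplitRel M M1 M2 ∧ MergeRel M' M1' M2' ∧
      Interp π1 M1 M1' ∧ Interp π2 M2 M2' ∧
      M1.R = M1'.R ∧ M1.W = M1'.W ∧ M1.V \ M1.W = M1'.V \ M1'.W ∧
      M2.R = M2'.R ∧ M2.W = M2'.W ∧ M2.V \ M2.W = M2'.V \ M2'.W
end

mutual
/-- Propositional variables occurring in a formula. -/
def varsF : Formula → Finset PVar
  | .atom p => {p}
  | .top => ∅
  | .neg φ => varsF φ
  | .or φ ψ => varsF φ ∪ varsF ψ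
  | .dia π φ => varsP π ∪ varsF φ
/-- Propositional variables occurring in a program. -/
def varsP : Program → Finset PVar
  | .assignT p => {p}
  | .assignF p => {p}
  | .addR p => {p}
  | .remR p => {p}
  | .addW p => {p}
  | .remW p => {p}
  | .testEx φ => varsF φ
  | .testEn φ => varsF φ
  | .seq π1 π2 => varsP π1 ∪ varsP π2
  | .choice π1 π2 => varsP π1 ∪ varsP π2
  | .star π => varsP π
  | .par π1 π2 => varsP π1 ∪ varsP π2
end

/-- `⊥`. -/
def botF : Formula := .neg .top
/-- Conjunction. -/
def andF (φ ψ : Formula) : Formula := .neg (.or (.neg φ) (.neg ψ))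
/-- Implication. -/
def impF (φ ψ : Formula) : Formula := .or (.neg φ) ψ
/-- Bi-implication. -/
def iffF (φ ψ : Formula) : Formula := andF (impF φ ψ) (impF ψ φ)
/-- `[π]φ`. -/
def boxF (π : Program) (φ : Formula) : Formula := .neg (.dia π (.neg φ))
/-- `w(p)`: `p` is writable. -/
def wF (p : PVar) : Formula := .dia (.assignT p) .top
/-- `r(p)`: `p` is readable. -/
def rF (p : PVar) : Formula :=
  .or (.dia (.testEn (.atom p)) .top) (.dia (.testEn (.neg (.atom p))) .top)

/-- Restriction `M ∩ P` of a model to a set of variables. -/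
def interModel (M : Model) (P : Set PVar) : Model :=
  ⟨M.R ∩ P, M.W ∩ P, M.V ∩ P, Set.inter_subset_inter M.sub (subset_refl P)⟩

/-- A formula is valid iff true in every model. -/
def Valid (φ : Formula) : Prop := ∀ M : Model, Sat M φ

/-- Boolean combinations (built with ¬, ∨, ⊤) of formulas of the three forms
`p`, `⟨+p⟩⊤` and `⟨p?ⁿ⟩⊤ ∨ ⟨¬p?ⁿ⟩⊤`. -/
inductive IsBool : Formula → Prop where
  | atom : ∀ p : PVar, IsBool (.atom p)
  | writable : ∀ p : PVar, IsBool (.dia (.assignT p) .top)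
  | readable : ∀ p : PVar,
      IsBool (.or (.dia (.testEn (.atom p)) .top)
                  (.dia (.testEn (.neg (.atom p))) .top))
  | top : IsBool .top
  | neg : ∀ φ, IsBool φ → IsBool (.neg φ)
  | or : ∀ φ ψ, IsBool φ → IsBool ψ → IsBool (.or φ ψ)


/-!
Truth of a formula `φ` in `M` depends only on the restriction `M ∩ P` of `M` to any set `P`
containing the variables of `φ`. This is proved simultaneously with the locality of programs:
a transition `M ⟦π⟧ M'` can be replayed from any `N` with `N ∩ P = M ∩ P`, reaching the model
that agrees with `M'` on `P` and with `N` outside `P`. Split, merge, indistinguishability and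
the frame conditions of `∥` are pointwise conditions, hence stable under this pasting.

For finite `P` there are only finitely many restrictions `M ∩ P`, and each is pinned down by a
conjunction of the literals `± r(p)`, `± w(p)`, `± p` for `p ∈ P`; so `φ` is equivalent to the
disjunction of the descriptions of those restrictions at which it holds.
-/

namespace Set

variable {α : Type*} {t s s' u : Set α}

theorem ite_union_union (t s₁ s₂ s₁' s₂' : Set α) :
    t.ite (s₁ ∪ s₂) (s₁' ∪ s₂') = t.ite s₁ s₁' ∪ t.ite s₂ s₂' := by
  ext x; by_cases hx : x ∈ t <;> simp [Set.ite, hx]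

theorem ite_sdiff_sdiff (t s₁ s₂ s₁' s₂' : Set α) :
    t.ite (s₁ \ s₂) (s₁' \ s₂') = t.ite s₁ s₁' \ t.ite s₂ s₂' := by
  ext x; by_cases hx : x ∈ t <;> simp [Set.ite, hx]

theorem ite_ite_right (t s s' u : Set α) : t.ite s (t.ite s' u) = t.ite s u := by
  ext x; by_cases hx : x ∈ t <;> simp [Set.ite, hx]

theorem ite_union_of_subset (h : u ⊆ t) : t.ite (s ∪ u) s' = t.ite s s' ∪ u := by
  ext x; by_cases hx : x ∈ t
  · simp [Set.ite, hx]
  · simp [Set.ite, hx, show x ∉ u from fun hu => hx (h hu)]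

theorem ite_sdiff_of_subset (h : u ⊆ t) : t.ite (s \ u) s' = t.ite s s' \ u := by
  ext x; by_cases hx : x ∈ t
  · simp [Set.ite, hx]
  · simp [Set.ite, hx, show x ∉ u from fun hu => hx (h hu)]

theorem ite_eq_right_of_inter_eq (h : s ∩ t = s' ∩ t) : t.ite s s' = s' := by
  rw [Set.ite, h, inter_union_sdiff]

end Set

theorem interModel_eq_iff {M N : Model} {P : Set PVar} :
    interModel M P = interModel N P ↔
      M.R ∩ P = N.R ∩ P ∧ M.W ∩ P = N.W ∩ P ∧ M.V ∩ P = N.V ∩ P := by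
  simp [interModel, Model.ext_iff]

def paste (M N : Model) (P : Set PVar) : Model :=
  ⟨P.ite M.R N.R, P.ite M.W N.W, P.ite M.V N.V, Set.ite_mono P M.sub N.sub⟩

def Model.ofVal (V : Set PVar) : Model := ⟨∅, ∅, V, subset_rfl⟩

section Paste

variable {M N K M₁ M₂ N₁ N₂ : Model} {P : Set PVar}

@[simp] theorem paste_R : (paste M N P).R = P.ite M.R N.R := rfl
@[simp] theorem paste_W : (paste M N P).W = P.ite M.W N.W := rfl
@[simp] theorem paste_V : (paste M N P).V = P.ite M.V N.V := rfl

@[simp]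
theorem interModel_paste : interModel (paste M N P) P = interModel M P := by
  simp [interModel_eq_iff]

theorem paste_eq_right (h : interModel M P = interModel N P) : paste M N P = N := by
  obtain ⟨hR, hW, hV⟩ := interModel_eq_iff.mp h
  ext1 <;> exact Set.ite_eq_right_of_inter_eq ‹_›

@[simp]
theorem paste_paste_right : paste M (paste N K P) P = paste M K P := by
  ext1 <;> exact Set.ite_ite_right ..

theorem RWdisjoint.paste (hM : RWdisjoint M₁ M₂) (hN : RWdisjoint N₁ N₂) :
    RWdisjoint (paste M₁ N₁ P) (paste M₂ N₂ P) := by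
  simp only [RWdisjoint, paste_R, paste_W, ← Set.ite_inter_inter, hM.1, hM.2, hN.1, hN.2,
    Set.ite_same, and_self]

theorem SplitRel.paste (hM : SplitRel M M₁ M₂) (hN : SplitRel N N₁ N₂) :
    SplitRel (paste M N P) (paste M₁ N₁ P) (paste M₂ N₂ P) := by
  obtain ⟨hM, hMR, hMW, hMV₁, hMV₂⟩ := hM
  obtain ⟨hN, hNR, hNW, hNV₁, hNV₂⟩ := hN
  refine ⟨hM.paste hN, ?_, ?_, ?_, ?_⟩
  · rw [paste_R, hMR, hNR, Set.ite_union_union]; rfl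
  · rw [paste_W, hMW, hNW, Set.ite_union_union]; rfl
  · rw [paste_V, hMV₁, hNV₁]; rfl
  · rw [paste_V, hMV₂, hNV₂]; rfl

theorem MergeRel.paste (hM : MergeRel M M₁ M₂) (hN : MergeRel N N₁ N₂) :
    MergeRel (paste M N P) (paste M₁ N₁ P) (paste M₂ N₂ P) := by
  obtain ⟨hM, hMR, hMW, hMV, hMV'⟩ := hM
  obtain ⟨hN, hNR, hNW, hNV, hNV'⟩ := hN
  refine ⟨hM.paste hN, ?_, ?_, ?_, ?_⟩
  · rw [paste_R, hMR, hNR, Set.ite_union_union]; rfl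
  · rw [paste_W, hMW, hNW, Set.ite_union_union]; rfl
  · simp only [paste_V, paste_W, ← Set.ite_sdiff_sdiff, hMV, hNV]
  · simp only [paste_V, paste_W, hMV', hNV', Set.ite_union_union, Set.ite_inter_inter]

theorem Indist.paste (hM : Indist M M₁) (hN : Indist N N₁) :
    Indist (paste M N P) (paste M₁ N₁ P) := by
  obtain ⟨hMR, hMW, hMV⟩ := hM
  obtain ⟨hNR, hNW, hNV⟩ := hN
  refine ⟨?_, ?_, ?_⟩
  · rw [paste_R, paste_R, hMR, hNR]
  · rw [paste_W, paste_W, hMW, hNW]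
  · simp only [paste_V, paste_R, ← Set.ite_inter_inter, hMV, hNV]

theorem splitRel_ofVal (N : Model) : SplitRel N N (.ofVal N.V) := by
  simp [SplitRel, RWdisjoint, Model.ofVal]

theorem mergeRel_ofVal (N : Model) : MergeRel N N (.ofVal N.V) := by
  simpa [MergeRel, RWdisjoint, Model.ofVal] using (Set.union_eq_right.2 Set.inter_subset_left).symm

end Paste

def IsLocal (P : Set PVar) (r : Model → Model → Prop) : Prop :=
  ∀ ⦃M M' N⦄, r M M' → interModel M P = interModel N P → r N (paste M' N P)

/-- The clause of `Interp` for `π₁ ∥ π₂`, with `Interp π₁` and `Interp π₂` abstracted. -/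
def ParRel (r₁ r₂ : Model → Model → Prop) (M M' : Model) : Prop :=
  ∃ M1 M2 M1' M2',
    SplitRel M M1 M2 ∧ MergeRel M' M1' M2' ∧ r₁ M1 M1' ∧ r₂ M2 M2' ∧
    M1.R = M1'.R ∧ M1.W = M1'.W ∧ M1.V \ M1.W = M1'.V \ M1'.W ∧
    M2.R = M2'.R ∧ M2.W = M2'.W ∧ M2.V \ M2.W = M2'.V \ M2'.W

namespace IsLocal

variable {P : Set PVar} {r r₁ r₂ : Model → Model → Prop}

theorem rel_paste (hr : IsLocal P r) {M M' : Model} (hM : r M M') (N : Model) :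
    r (paste M N P) (paste M' N P) := by
  simpa using hr hM interModel_paste.symm

theorem comp (h₁ : IsLocal P r₁) (h₂ : IsLocal P r₂) : IsLocal P (Relation.Comp r₁ r₂) := by
  rintro M M'' N ⟨M', hM', hM''⟩ h
  exact ⟨paste M' N P, h₁ hM' h, h₂.rel_paste hM'' N⟩

theorem or (h₁ : IsLocal P r₁) (h₂ : IsLocal P r₂) :
    IsLocal P (fun M M' => r₁ M M' ∨ r₂ M M') := by
  rintro M M' N (hM' | hM') h
  exacts [.inl (h₁ hM' h), .inr (h₂ hM' h)]

theorem reflTransGen (hr : IsLocal P r) : IsLocal P (Relation.ReflTransGen r) := by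
  intro M M' N hM' h
  induction hM' with
  | refl => rw [paste_eq_right h]
  | tail _ hstep ih => exact ih.tail (hr.rel_paste hstep N)

theorem parRel (h₁ : IsLocal P r₁) (h₂ : IsLocal P r₂) : IsLocal P (ParRel r₁ r₂) := by
  rintro M M' N ⟨M₁, M₂, M₁', M₂', hsplit, hmerge, hr₁, hr₂, e₁R, e₁W, e₁V, e₂R, e₂W, e₂V⟩ h
  refine ⟨paste M₁ N P, paste M₂ (.ofVal N.V) P, paste M₁' N P, paste M₂' (.ofVal N.V) P,
    ?_, hmerge.paste (mergeRel_ofVal N), h₁.rel_paste hr₁ N, h₂.rel_paste hr₂ _,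
    ?_, ?_, ?_, ?_, ?_, ?_⟩
  -- Outside `P`, `N` is split into itself and a component without access rights,
  -- and the matching merge is trivial.
  · simpa only [paste_eq_right h] using hsplit.paste (P := P) (splitRel_ofVal N)
  all_goals
    simp only [paste_R, paste_W, paste_V, ← Set.ite_sdiff_sdiff]
    exact congrArg (P.ite · _) ‹_›

end IsLocal

mutual

theorem sat_congr {φ : Formula} {P : Set PVar} (hφ : ↑(varsF φ) ⊆ P) {M N : Model}
    (h : interModel M P = interModel N P) : Sat M φ ↔ Sat N φ := by
  match φ with
  | .atom p =>
    have hp : p ∈ P := by simpa [varsF] using hφ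
    simpa [Sat, interModel, hp] using congrArg (p ∈ ·.V) h
  | .top => rfl
  | .neg φ => exact not_congr (sat_congr (φ := φ) hφ h)
  | .or φ ψ =>
    simp only [varsF, Finset.coe_union, Set.union_subset_iff] at hφ
    exact or_congr (sat_congr hφ.1 h) (sat_congr hφ.2 h)
  | .dia π φ =>
    simp only [varsF, Finset.coe_union, Set.union_subset_iff] at hφ
    have step : ∀ {M N : Model}, interModel M P = interModel N P →
        Sat M (.dia π φ) → Sat N (.dia π φ) := by
      rintro M N h ⟨M', hM', hφM'⟩
      exact ⟨paste M' N P, isLocal_interp hφ.1 hM' h,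
        (sat_congr hφ.2 interModel_paste.symm).1 hφM'⟩
    exact ⟨step h, step h.symm⟩

theorem isLocal_interp {π : Program} {P : Set PVar} (hπ : ↑(varsP π) ⊆ P) :
    IsLocal P (Interp π) := by
  match π with
  | .assignT p | .assignF p | .addR p | .remR p | .addW p | .remW p =>
    have hp : p ∈ P := by simpa [varsP] using hπ
    intro M M' N hM h
    have hN := paste_eq_right h
    simp only [Model.ext_iff, paste_R, paste_W, paste_V] at hN
    have hpW : p ∈ M.W ↔ p ∈ N.W := by simpa [interModel, hp] using congrArg (p ∈ ·.W) h
    simp only [Interp] at hM ⊢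
    have hp' : {p} ⊆ P := Set.singleton_subset_iff.2 hp
    simp only [paste_R, paste_W, paste_V, hM, Set.ite_union_of_subset hp',
      Set.ite_sdiff_of_subset hp', hN, ← hpW, and_self]
  | .testEx φ =>
    rintro M _ N ⟨rfl, hφM⟩ h
    rw [paste_eq_right h]
    exact ⟨rfl, (sat_congr hπ h).1 hφM⟩
  | .testEn φ =>
    rintro M _ N ⟨rfl, hφM⟩ h
    rw [paste_eq_right h]
    -- `K ∼ N` pasted onto `M` outside `P` is `∼ M` and agrees with `K` on `P`.
    refine ⟨rfl, fun K hK => (sat_congr hπ interModel_paste).1 (hφM (paste K M P) ?_)⟩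
    simpa only [paste_eq_right h.symm] using hK.paste (P := P) (⟨rfl, rfl, rfl⟩ : Indist M M)
  | .seq π₁ π₂ =>
    simp only [varsP, Finset.coe_union, Set.union_subset_iff] at hπ
    exact (isLocal_interp hπ.1).comp (isLocal_interp hπ.2)
  | .choice π₁ π₂ =>
    simp only [varsP, Finset.coe_union, Set.union_subset_iff] at hπ
    exact (isLocal_interp hπ.1).or (isLocal_interp hπ.2)
  | .star π => exact (isLocal_interp (π := π) hπ).reflTransGen
  | .par π₁ π₂ =>
    simp only [varsP, Finset.coe_union, Set.union_subset_iff] at hπ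
    exact (isLocal_interp hπ.1).parRel (isLocal_interp hπ.2)

end

theorem sat_wF (M : Model) (p : PVar) : Sat M (wF p) ↔ p ∈ M.W := by
  simp only [wF, Sat, Interp, and_true]
  exact ⟨fun ⟨_, h⟩ => h.2.2.2, fun hp => ⟨⟨M.R, M.W, M.V ∪ {p}, M.sub⟩, rfl, rfl, rfl, hp⟩⟩

theorem Indist.mem_V_iff {K M : Model} (h : Indist K M) {p : PVar} (hp : p ∈ M.R) :
    p ∈ K.V ↔ p ∈ M.V := by
  simpa [h.1, hp] using congrArg (p ∈ ·) h.2.2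

theorem sat_rF (M : Model) (p : PVar) : Sat M (rF p) ↔ p ∈ M.R := by
  simp only [rF, Sat, Interp, exists_eq_left', and_true]
  constructor
  · intro h
    by_contra hp
    -- the value of an unreadable variable can be flipped within the `∼`-class of `M`
    have indist_of (V : Set PVar) (hV : V ∩ M.R = M.V ∩ M.R) :
        Indist ⟨M.R, M.W, V, M.sub⟩ M := ⟨rfl, rfl, hV⟩
    rcases h with h | h
    · refine (h _ (indist_of (M.V \ {p}) ?_)).2 rfl
      ext x; by_cases hx : x = p <;> simp [hx, hp]
    · exact h _ (indist_of (insert p M.V) (Set.insert_inter_of_notMem hp)) (Set.mem_insert p _)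
  · intro hp
    by_cases hV : p ∈ M.V
    · exact .inl fun K hK => (hK.mem_V_iff hp).2 hV
    · exact .inr fun K hK => mt (hK.mem_V_iff hp).1 hV

def bigAnd (l : List Formula) : Formula := l.foldr andF .top

def bigOr (l : List Formula) : Formula := l.foldr .or botF

def signed (b : Prop) [Decidable b] (χ : Formula) : Formula := if b then χ else .neg χ

section Sat

variable {M : Model} {l : List Formula}

theorem sat_bigAnd : Sat M (bigAnd l) ↔ ∀ χ ∈ l, Sat M χ := by
  induction l with
  | nil => simp [bigAnd, Sat]
  | cons χ l ih => simp [bigAnd, andF, Sat, ← ih]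

theorem sat_bigOr : Sat M (bigOr l) ↔ ∃ χ ∈ l, Sat M χ := by
  induction l with
  | nil => simp [bigOr, botF, Sat]
  | cons χ l ih => simp [bigOr, Sat, ← ih]

theorem sat_signed (b : Prop) [Decidable b] (χ : Formula) :
    Sat M (signed b χ) ↔ (Sat M χ ↔ b) := by
  by_cases hb : b <;> simp [signed, hb, Sat]

end Sat

namespace IsBool

variable {l : List Formula}

theorem bigAnd (h : ∀ χ ∈ l, IsBool χ) : IsBool (bigAnd l) := by
  induction l with
  | nil => exact .top
  | cons χ l ih =>
    simp only [List.mem_cons, forall_eq_or_imp] at h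
    exact .neg _ (.or _ _ (.neg _ h.1) (.neg _ (ih h.2)))

theorem bigOr (h : ∀ χ ∈ l, IsBool χ) : IsBool (bigOr l) := by
  induction l with
  | nil => exact .neg _ .top
  | cons χ l ih =>
    simp only [List.mem_cons, forall_eq_or_imp] at h
    exact .or _ _ h.1 (ih h.2)

theorem signed {χ : Formula} (b : Prop) [Decidable b] (h : IsBool χ) : IsBool (signed b χ) := by
  unfold _root_.signed; split
  exacts [h, .neg _ h]

end IsBool

noncomputable def describe (P : Finset PVar) (T : Finset PVar × Finset PVar × Finset PVar) :
    Formula :=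
  bigAnd (P.toList.flatMap fun p =>
    [signed (p ∈ T.1) (rF p), signed (p ∈ T.2.1) (wF p), signed (p ∈ T.2.2) (.atom p)])

theorem isBool_describe (P : Finset PVar) (T : Finset PVar × Finset PVar × Finset PVar) :
    IsBool (describe P T) :=
  .bigAnd <| by
    simp only [List.mem_flatMap, List.mem_cons, List.not_mem_nil, or_false]
    rintro _ ⟨p, -, rfl | rfl | rfl⟩
    exacts [.signed _ (.readable p), .signed _ (.writable p), .signed _ (.atom p)]

open Classical in
noncomputable def profile (P : Finset PVar) (M : Model) :
    Finset PVar × Finset PVar × Finset PVar :=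
  (P.filter (· ∈ M.R), P.filter (· ∈ M.W), P.filter (· ∈ M.V))

theorem sat_describe {P : Finset PVar} {T : Finset PVar × Finset PVar × Finset PVar}
    {N : Model} :
    Sat N (describe P T) ↔
      ∀ p ∈ P, (p ∈ N.R ↔ p ∈ T.1) ∧ (p ∈ N.W ↔ p ∈ T.2.1) ∧ (p ∈ N.V ↔ p ∈ T.2.2) := by
  rw [describe, sat_bigAnd, List.forall_mem_flatMap]
  simp [sat_signed, sat_rF, sat_wF, Sat]

theorem sat_describe_profile {P : Finset PVar} {M N : Model} :
    Sat N (describe P (profile P M)) ↔ interModel N P = interModel M P := by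
  simp +contextual [sat_describe, profile, interModel_eq_iff, Set.ext_iff, imp_and, forall_and]

theorem exists_isBool_of_interModel_eq (P : Finset PVar) {φ : Formula}
    (hφ : ∀ M N, interModel M P = interModel N P → Sat M φ → Sat N φ) :
    ∃ ψ, IsBool ψ ∧ ∀ M, Sat M φ ↔ Sat M ψ := by
  classical
  let profiles := P.powerset ×ˢ P.powerset ×ˢ P.powerset
  have mem_profiles (M : Model) : profile P M ∈ profiles := by simp [profiles, profile]
  let good := profiles.filter fun T => ∃ M, Sat M φ ∧ profile P M = T
  refine ⟨bigOr (good.toList.map (describe P)), .bigOr ?_, fun N => ?_⟩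
  · simp only [List.mem_map]
    rintro _ ⟨T, -, rfl⟩
    exact isBool_describe P T
  simp only [sat_bigOr, List.mem_map, Finset.mem_toList, exists_exists_and_eq_and]
  constructor
  · intro hN
    exact ⟨profile P N, Finset.mem_filter.2 ⟨mem_profiles N, N, hN, rfl⟩,
      sat_describe_profile.2 rfl⟩
  · rintro ⟨_, hT, hN⟩
    obtain ⟨-, M, hM, rfl⟩ := Finset.mem_filter.1 hT
    exact hφ M N (sat_describe_profile.1 hN).symm hM

/-- Reduction to Boolean form: every DL-PA∥ formula is equivalent
(true in exactly the same models) to a Boolean combination of propositional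
variables, writability statements and readability statements. -/
theorem reduction_to_boolean (φ : Formula) :
    ∃ ψ : Formula, IsBool ψ ∧ ∀ M : Model, Sat M φ ↔ Sat M ψ :=
  exists_isBool_of_interModel_eq (varsF φ) fun _ _ h => (sat_congr subset_rfl h).1
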